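/- Let p(t) ∈ ℤ[t] have constant coefficient 1 and leading coefficient ±1, and write 1/p(t) = 1 + a_1 t + a_2 t^2 + ⋯ for its multiplicative inverse in ℤ[[t]]. Then the sequence (a_n) is polynomially bounded (there exist constants C and r with |a_n| ≤ C·n^r for all n ≥ 1) if and only if every zero of p(t) in ℂ is a root of unity. -/

import Mathlib

/-!
If every root of `p` is a root of unity, say `z ^ N = 1` for all roots, then `p` divides
`(1 - X ^ N) ^ k` for some `k`, so `1 / p = q / (1 - X ^ N) ^ k` for a polynomial `q`; the
coefficients of `1 / (1 - X ^ N)` lie in `{0, 1}`, hence those of `1 / p` grow polynomially.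

Conversely, polynomially bounded coefficients make `∑ aₙ zⁿ` converge absolutely on the open
unit disc, where it multiplies with `p(z)` to `1`; so no root lies inside the disc. Since
`|p(0)| = |leading coefficient|`, the product of the absolute values of the roots is `1`, so all
roots lie on the unit circle. Each root is an algebraic integer all of whose conjugates are again
roots of `p`, and Kronecker's theorem makes it a root of unity.
-/

open Polynomial Finset Filter IntermediateField

theorem Finset.exists_pow_eq_one_of_isOfFinOrder {G : Type*} [Monoid G] (s : Finset G)
    (h : ∀ x ∈ s, IsOfFinOrder x) : ∃ N, 0 < N ∧ ∀ x ∈ s, x ^ N = 1 :=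
  ⟨s.prod orderOf, prod_pos fun x hx => (h x hx).orderOf_pos,
    fun _ hx => orderOf_dvd_iff_pow_eq_one.1 (dvd_prod_of_mem _ hx)⟩

namespace Polynomial

theorem tsum_coeff_mul_pow {R A : Type*} [CommSemiring R] [Semiring A] [TopologicalSpace A]
    [Algebra R A] (p : R[X]) (z : A) : ∑' n, algebraMap R A (p.coeff n) * z ^ n = aeval z p := by
  rw [aeval_eq_sum_range, tsum_eq_sum (s := range (p.natDegree + 1)) fun n hn => ?_]
  · simp [Algebra.smul_def]
  · rw [coeff_eq_zero_of_natDegree_lt (by simpa [Nat.lt_succ_iff] using hn), map_zero, zero_mul]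

theorem Splits.norm_le_one_of_mem_roots {K : Type*} [NormedField K] {P : K[X]} (hP : P.Splits)
    (h0 : ‖P.coeff 0‖ ≤ ‖P.leadingCoeff‖) (hge : ∀ w ∈ P.roots, 1 ≤ ‖w‖) {z : K}
    (hz : z ∈ P.roots) : ‖z‖ ≤ 1 := by
  have hlc : 0 < ‖P.leadingCoeff‖₊ :=
    nnnorm_pos.2 (leadingCoeff_ne_zero.2 (ne_zero_of_mem_roots hz))
  have hcoeff : ‖P.coeff 0‖₊ = ‖P.leadingCoeff‖₊ * (P.roots.map (‖·‖₊)).prod := by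
    rw [hP.coeff_zero_eq_leadingCoeff_mul_prod_roots, nnnorm_mul, nnnorm_mul, nnnorm_pow,
      nnnorm_neg, nnnorm_one, one_pow, one_mul]
    exact congrArg _ (map_multiset_prod nnnormHom _)
  have hprod : ‖P.leadingCoeff‖₊ * (P.roots.map (‖·‖₊)).prod ≤ ‖P.leadingCoeff‖₊ * 1 := by
    rw [mul_one, ← hcoeff]
    exact h0
  have hle := (Multiset.single_le_prod (fun x hx => ?_) _ (Multiset.mem_map_of_mem _ hz)).trans
    (le_of_mul_le_mul_left hprod hlc)
  · exact_mod_cast hle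
  · obtain ⟨w, hw, rfl⟩ := Multiset.mem_map.1 hx
    exact_mod_cast hge w hw

theorem Monic.exists_dvd_one_sub_X_pow_pow {K : Type*} [Field K] [IsAlgClosed K] {P : K[X]}
    (hP : P.Monic) (h : ∀ z ∈ P.roots, IsOfFinOrder z) :
    ∃ N, 0 < N ∧ P ∣ (1 - X ^ N) ^ P.roots.card := by
  classical
  obtain ⟨N, hN, hzN⟩ := P.roots.toFinset.exists_pow_eq_one_of_isOfFinOrder
    fun z hz => h z (Multiset.mem_toFinset.1 hz)
  refine ⟨N, hN, ?_⟩
  conv_lhs => rw [(IsAlgClosed.splits P).eq_prod_roots_of_monic hP]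
  rw [← Multiset.prod_replicate, ← Multiset.map_const']
  exact Multiset.prod_dvd_prod_of_dvd _ _ fun z hz =>
    dvd_iff_isRoot.2 (by simp [hzN z (Multiset.mem_toFinset.2 hz)])

variable {R : Type*} [CommRing R]

theorem exists_dvd_one_sub_X_pow_pow_of_isOfFinOrder {K : Type*} [Field K] [IsAlgClosed K]
    [Algebra R K] (hinj : Function.Injective (algebraMap R K)) {p : R[X]}
    (hu : IsUnit p.leadingCoeff) (h : ∀ z : K, aeval z p = 0 → IsOfFinOrder z) :
    ∃ N, 0 < N ∧ ∃ k, p ∣ (1 - X ^ N) ^ k := by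
  set q := C (↑hu.unit⁻¹ : R) * p
  have hq : q.Monic := monic_C_mul_of_mul_leadingCoeff_eq_one (by simp)
  have hqp : q ∣ p := (isUnit_C.2 (Units.isUnit _)).mul_left_dvd.2 dvd_rfl
  obtain ⟨N, hN, hdvd⟩ := (hq.map (algebraMap R K)).exists_dvd_one_sub_X_pow_pow fun z hz =>
    h z (aeval_eq_zero_of_dvd_aeval_eq_zero hqp
      (by simpa [aeval_def, eval_map] using (mem_roots'.1 hz).2))
  refine ⟨N, hN, (q.map (algebraMap R K)).roots.card,
    (dvd_mul_left p _).trans ((map_dvd_map _ hinj hq).1 ?_)⟩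
  simpa using hdvd

theorem isIntegral_of_isUnit_leadingCoeff {A : Type*} [CommRing A] [Algebra R A] {p : R[X]}
    (hu : IsUnit p.leadingCoeff) {z : A} (hz : aeval z p = 0) : IsIntegral R z := by
  simpa [smul_smul] using (isIntegral_leadingCoeff_smul p z hz).smul (↑hu.unit⁻¹ : R)

end Polynomial

theorem IsIntegral.isOfFinOrder_of_roots_norm_le_one {z : ℂ} (hzi : IsIntegral ℤ z) (hz0 : z ≠ 0)
    {p : ℤ[X]} (hpz : aeval z p = 0) (hp : ∀ w : ℂ, aeval w p = 0 → ‖w‖ ≤ 1) :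
    IsOfFinOrder z := by
  have : FiniteDimensional ℚ ℚ⟮z⟯ := adjoin.finiteDimensional hzi.tower_top
  have : NumberField ℚ⟮z⟯ := ⟨⟩
  set x := AdjoinSimple.gen ℚ z
  have hx : algebraMap ℚ⟮z⟯ ℂ x = z := AdjoinSimple.algebraMap_gen ℚ z
  have hxi : IsIntegral ℤ x :=
    (isIntegral_algebraMap_iff (algebraMap ℚ⟮z⟯ ℂ).injective).1 (by rwa [hx])
  have hpx : aeval x p = 0 :=
    (algebraMap ℚ⟮z⟯ ℂ).injective (by rw [← aeval_algebraMap_apply, hx, hpz, map_zero])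
  have hx0 : x ≠ 0 := fun h => hz0 (by rw [← hx, h, map_zero])
  obtain ⟨n, hn, hxn⟩ := NumberField.Embeddings.pow_eq_one_of_norm_le_one ℚ⟮z⟯ ℂ hx0 hxi
    fun φ => hp _ (by rw [← φ.toIntAlgHom_apply, aeval_algHom_apply, hpx, map_zero])
  rw [← hx]
  exact (algebraMap ℚ⟮z⟯ ℂ : ℚ⟮z⟯ →* ℂ).isOfFinOrder (isOfFinOrder_iff_pow_eq_one.2 ⟨n, hn, hxn⟩)

namespace PowerSeries

def CoeffPolyBounded (f : ℤ⟦X⟧) : Prop :=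
  ∃ C r : ℕ, ∀ n, |coeff n f| ≤ C * ((n : ℤ) + 1) ^ r

theorem coeffPolyBounded_mk_iff (a : ℕ → ℤ) :
    (mk a).CoeffPolyBounded ↔ ∃ C r : ℕ, ∀ n : ℕ, 1 ≤ n → |a n| ≤ (C : ℤ) * (n : ℤ) ^ r := by
  simp only [CoeffPolyBounded, coeff_mk]
  constructor
  · rintro ⟨C, r, h⟩
    refine ⟨C * 2 ^ r, r, fun n hn => (h n).trans ?_⟩
    have : (n : ℤ) + 1 ≤ 2 * n := by omega
    calc (C : ℤ) * ((n : ℤ) + 1) ^ r ≤ C * (2 * n) ^ r := by gcongr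
      _ = (C * 2 ^ r : ℕ) * (n : ℤ) ^ r := by push_cast; ring
  · rintro ⟨C, r, h⟩
    refine ⟨C + (a 0).natAbs, r, fun n => ?_⟩
    rcases Nat.eq_zero_or_pos n with rfl | hn
    · simp
    · calc |a n| ≤ C * (n : ℤ) ^ r := h n hn
        _ ≤ (C + (a 0).natAbs : ℕ) * ((n : ℤ) + 1) ^ r := by
          have := abs_nonneg (a 0)
          push_cast
          gcongr <;> omega

theorem CoeffPolyBounded.mul {f g : ℤ⟦X⟧} (hf : f.CoeffPolyBounded) (hg : g.CoeffPolyBounded) :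
    (f * g).CoeffPolyBounded := by
  obtain ⟨C, r, hC⟩ := hf
  obtain ⟨D, s, hD⟩ := hg
  refine ⟨C * D, r + s + 1, fun n => ?_⟩
  calc |coeff n (f * g)|
      ≤ ∑ x ∈ antidiagonal n, |coeff x.1 f * coeff x.2 g| := by
        rw [coeff_mul]
        exact abs_sum_le_sum_abs _ _
    _ ≤ ∑ _x ∈ antidiagonal n, (C * ((n : ℤ) + 1) ^ r) * (D * ((n : ℤ) + 1) ^ s) := by
        refine sum_le_sum fun x hx => ?_
        have hx := mem_antidiagonal.1 hx
        rw [abs_mul]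
        refine mul_le_mul ((hC _).trans ?_) ((hD _).trans ?_) (abs_nonneg _) (by positivity) <;>
          gcongr <;> omega
    _ = (C * D : ℕ) * ((n : ℤ) + 1) ^ (r + s + 1) := by
        rw [sum_const, Nat.card_antidiagonal, nsmul_eq_mul]
        push_cast
        ring

theorem CoeffPolyBounded.pow {f : ℤ⟦X⟧} (hf : f.CoeffPolyBounded) (k : ℕ) :
    (f ^ k).CoeffPolyBounded := by
  induction k with
  | zero => exact ⟨1, 0, fun n => by rw [pow_zero, coeff_one]; split_ifs <;> simp⟩
  | succ k ih => rw [pow_succ]; exact ih.mul hf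

theorem coeffPolyBounded_of_abs_coeff_le {f : ℤ⟦X⟧} (C : ℕ) (h : ∀ n, |coeff n f| ≤ C) :
    f.CoeffPolyBounded :=
  ⟨C, 0, by simpa using h⟩

theorem coeffPolyBounded_coe (q : ℤ[X]) : (q : ℤ⟦X⟧).CoeffPolyBounded := by
  refine coeffPolyBounded_of_abs_coeff_le (∑ i ∈ q.support, (q.coeff i).natAbs) fun n => ?_
  rw [Polynomial.coeff_coe]
  push_cast
  by_cases hn : n ∈ q.support
  · exact single_le_sum (f := fun i => |q.coeff i|) (fun _ _ => abs_nonneg _) hn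
  · rw [Polynomial.notMem_support_iff.1 hn, abs_zero]
    positivity

theorem one_sub_X_pow_mul_mk_ite_dvd {R : Type*} [Ring R] {N : ℕ} (hN : 0 < N) :
    (1 - X ^ N : R⟦X⟧) * mk (fun n => if N ∣ n then 1 else 0) = 1 := by
  ext n
  rw [sub_mul, one_mul, map_sub, coeff_X_pow_mul', coeff_mk, coeff_one]
  rcases Nat.eq_zero_or_pos n with rfl | hn
  · simp [hN.ne']
  by_cases hNn : N ≤ n
  · obtain ⟨m, rfl⟩ := Nat.exists_eq_add_of_le hNn
    simp [hN.ne', Nat.dvd_add_right (dvd_refl N)]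
  · have : ¬ N ∣ n := fun h => hNn (Nat.le_of_dvd hn h)
    simp [hNn, hn.ne', this]

theorem coeffPolyBounded_of_coe_mul_eq_one_of_dvd {p : ℤ[X]} {f : ℤ⟦X⟧}
    (hpf : (p : ℤ⟦X⟧) * f = 1) {N k : ℕ} (hN : 0 < N) (hdvd : p ∣ (1 - Polynomial.X ^ N) ^ k) :
    f.CoeffPolyBounded := by
  obtain ⟨q, hq⟩ := hdvd
  set g : ℤ⟦X⟧ := mk fun n => if N ∣ n then 1 else 0
  have hq' : ((1 - X ^ N) ^ k : ℤ⟦X⟧) = p * q := by simpa using congrArg (↑· : ℤ[X] → ℤ⟦X⟧) hq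
  have hgk : ((1 - X ^ N) ^ k : ℤ⟦X⟧) * g ^ k = 1 := by
    rw [← mul_pow, one_sub_X_pow_mul_mk_ite_dvd hN, one_pow]
  have hf : f = q * g ^ k := by
    linear_combination (-f) * hgk + (f * g ^ k) * hq' + (q * g ^ k) * hpf
  have hg : g.CoeffPolyBounded :=
    coeffPolyBounded_of_abs_coeff_le 1 fun n => by simp only [g, coeff_mk]; split_ifs <;> simp
  rw [hf]
  exact (coeffPolyBounded_coe q).mul (hg.pow k)

theorem tsum_coeff_mul_mul_pow {R : Type*} [NormedCommRing R] [CompleteSpace R] {f g : R⟦X⟧}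
    {z : R} (hf : Summable fun n => ‖coeff n f * z ^ n‖)
    (hg : Summable fun n => ‖coeff n g * z ^ n‖) :
    ∑' n, coeff n (f * g) * z ^ n = (∑' n, coeff n f * z ^ n) * ∑' n, coeff n g * z ^ n := by
  rw [tsum_mul_tsum_eq_tsum_sum_antidiagonal_of_summable_norm hf hg]
  refine tsum_congr fun n => ?_
  rw [coeff_mul, sum_mul]
  refine sum_congr rfl fun x hx => ?_
  rw [← mem_antidiagonal.1 hx, pow_add]
  ring

theorem CoeffPolyBounded.summable_norm_coeff_mul_pow {f : ℤ⟦X⟧} (hf : f.CoeffPolyBounded)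
    {z : ℂ} (hz : ‖z‖ < 1) : Summable fun n => ‖((coeff n f : ℤ) : ℂ) * z ^ n‖ := by
  obtain ⟨C, r, hC⟩ := hf
  have hgeom : Summable fun n : ℕ => (n : ℝ) ^ r * ‖z‖ ^ n :=
    summable_pow_mul_geometric_of_norm_lt_one r (by rwa [norm_norm])
  refine Summable.of_norm_bounded_eventually_nat (hgeom.mul_left ((C : ℝ) * 2 ^ r))
    ((eventually_ge_atTop 1).mono fun n hn => ?_)
  have hC' : |((coeff n f : ℤ) : ℝ)| ≤ C * ((n : ℝ) + 1) ^ r := by exact_mod_cast hC n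
  have hn' : (n : ℝ) + 1 ≤ 2 * n := by
    have : (1 : ℝ) ≤ n := by exact_mod_cast hn
    linarith
  rw [norm_norm, norm_mul, norm_pow, Complex.norm_intCast]
  calc |((coeff n f : ℤ) : ℝ)| * ‖z‖ ^ n ≤ C * (2 * n) ^ r * ‖z‖ ^ n := by
        gcongr
        exact hC'.trans (by gcongr)
    _ = C * 2 ^ r * ((n : ℝ) ^ r * ‖z‖ ^ n) := by ring

theorem CoeffPolyBounded.aeval_ne_zero_of_norm_lt_one {p : ℤ[X]} {f : ℤ⟦X⟧}
    (hf : f.CoeffPolyBounded) (hpf : (p : ℤ⟦X⟧) * f = 1) {z : ℂ} (hz : ‖z‖ < 1) :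
    Polynomial.aeval z p ≠ 0 := by
  set φ := map (Int.castRingHom ℂ)
  have hP : Summable fun n => ‖coeff n (φ p) * z ^ n‖ :=
    summable_of_ne_finset_zero (s := range (p.natDegree + 1)) fun n hn => by
      simp [φ, coeff_eq_zero_of_natDegree_lt (by simpa [Nat.lt_succ_iff] using hn)]
  have hF : Summable fun n => ‖coeff n (φ f) * z ^ n‖ := by
    simpa [φ] using hf.summable_norm_coeff_mul_pow hz
  have h := tsum_coeff_mul_mul_pow hP hF
  rw [← map_mul, hpf, map_one] at h
  have hp : ∑' n, (p.coeff n : ℂ) * z ^ n = Polynomial.aeval z p := by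
    simpa using p.tsum_coeff_mul_pow z
  simp only [φ, coeff_one, ite_mul, one_mul, zero_mul, tsum_ite_eq,
    coeff_map, Polynomial.coeff_coe, eq_intCast, hp] at h
  intro h0
  simp [h0] at h

end PowerSeries

/-- For p(t) ∈ ℤ[t] with constant coefficient 1 and leading coefficient
±1, writing 1/p(t) = Σ a_n t^n in ℤ[[t]], the sequence (a_n) is polynomially bounded
if and only if every complex zero of p is a root of unity. -/
theorem statement_10 (p : Polynomial ℤ) (h0 : p.coeff 0 = 1)
    (hlead : p.leadingCoeff = 1 ∨ p.leadingCoeff = -1)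
    (a : ℕ → ℤ) (ha : (p : PowerSeries ℤ) * PowerSeries.mk a = 1) :
    (∃ C r : ℕ, ∀ n : ℕ, 1 ≤ n → |a n| ≤ (C : ℤ) * (n : ℤ) ^ r) ↔
      ∀ z : ℂ, Polynomial.aeval z p = 0 → ∃ m : ℕ, 0 < m ∧ z ^ m = 1 := by
  have hu : IsUnit p.leadingCoeff := by rcases hlead with h | h <;> simp [h]
  rw [← PowerSeries.coeffPolyBounded_mk_iff]
  simp only [← isOfFinOrder_iff_pow_eq_one]
  constructor
  · intro hb z hz
    have hp0 : p ≠ 0 := fun hp => by simp [hp] at h0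
    have hge : ∀ w ∈ p.aroots ℂ, 1 ≤ ‖w‖ := fun w hw =>
      not_lt.1 fun hlt => hb.aeval_ne_zero_of_norm_lt_one ha hlt (mem_aroots.1 hw).2
    have hbound :
        ‖(p.map (algebraMap ℤ ℂ)).coeff 0‖ ≤ ‖(p.map (algebraMap ℤ ℂ)).leadingCoeff‖ := by
      rw [coeff_map, leadingCoeff_map_eq_of_isUnit_leadingCoeff _ hu]
      rcases hlead with h | h <;> simp [h, h0]
    have hz0 : z ≠ 0 := by
      rintro rfl
      simp [← coeff_zero_eq_aeval_zero', h0] at hz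
    exact (isIntegral_of_isUnit_leadingCoeff hu hz).isOfFinOrder_of_roots_norm_le_one hz0 hz
      fun w hw => (IsAlgClosed.splits _).norm_le_one_of_mem_roots hbound hge
        (mem_aroots.2 ⟨hp0, hw⟩)
  · intro hroots
    obtain ⟨N, hN, k, hdvd⟩ :=
      exists_dvd_one_sub_X_pow_pow_of_isOfFinOrder (algebraMap ℤ ℂ).injective_int hu hroots
    exact PowerSeries.coeffPolyBounded_of_coe_mul_eq_one_of_dvd ha hN hdvd
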